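/- Let C_i ⊆ H, i = 0,...,m-1, be nonempty closed convex sets with int(∩_{i=0}^{m-1} C_i) ≠ ∅ and fix r ∈ {2,...,m-1}. Define S_d := T_{C_{((r-1)d-(r-1)) mod m},...,C_{((r-1)d) mod m}} and Q := S_m ∘ ... ∘ S_1. Then for any x⁰ ∈ H, the sequence x^{k+1} = Q(x^k) converges weakly to a point x* ∈ ∩_{i=0}^{m-1} C_i. -/

import Mathlib

/-!
Fix a ball `B = ball z ε` inside `⋂ C_i`. Each reflection `2 P_{C_i} - Id` is nonexpansive (the
projection onto a convex set is firmly nonexpansive) and fixes `B` pointwise, hence so do the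
operators `S_d` and `Q`. The iterates are therefore Fejér monotone with respect to `B`; testing this
at `w = z + c (x_k - x_{k+1})` with `c ‖x_k - x_{k+1}‖ = ε / 2` bounds `ε ‖x_k - x_{k+1}‖` by the
decrease of `‖x_k - z‖²`, so the steps are summable and `x_k` converges in norm to a fixed point
`x*` of `Q`. Two points at equal distance from every point of `B` coincide; pushed through the
compositions this shows that `x*` is fixed by every `S_d`, then by every reflection, so `x*` lies
in `C_i` for every index `((r - 1)(d - 1) + j) mod m`, and these indices exhaust `0, …, m - 1`.
-/

open Filter Topology RealInnerProductSpace Metric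

section Foldl

variable {α : Type*}

lemma foldl_eq_self_of_forall_eq_self {n : ℕ} {f : Fin n → α → α} {x : α}
    (h : ∀ i, f i x = x) : Fin.foldl n (fun y i => f i y) x = x := by
  induction n with
  | zero => exact Fin.foldl_zero _ _
  | succ n ih => rw [Fin.foldl_succ, h 0]; exact ih fun i => h i.succ

lemma lipschitzWith_foldl [PseudoEMetricSpace α] {n : ℕ} {K : NNReal} {f : Fin n → α → α}
    (hf : ∀ i, LipschitzWith K (f i)) :
    LipschitzWith (K ^ n) fun x => Fin.foldl n (fun y i => f i y) x := by
  induction n with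
  | zero => rw [pow_zero]; exact LipschitzWith.id
  | succ n ih =>
    simp only [Fin.foldl_succ]
    rw [pow_succ]
    exact (ih fun i => hf i.succ).comp (hf 0)

end Foldl

section BallFejer

variable {H : Type*} [NormedAddCommGroup H] [InnerProductSpace ℝ H]

lemma add_smul_mem_ball {z u : H} {ε : ℝ} (hε : 0 < ε) (hu : u ≠ 0) :
    z + (ε / (2 * ‖u‖)) • u ∈ ball z ε := by
  have hu' : 0 < ‖u‖ := norm_pos_iff.mpr hu
  rw [mem_ball, dist_eq_norm, add_sub_cancel_left, norm_smul, Real.norm_eq_abs,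
    abs_of_pos (by positivity), div_mul_eq_mul_div, mul_div_mul_right _ _ hu'.ne']
  linarith

lemma mul_norm_sub_le_sq_sub_sq {z a b : H} {ε : ℝ} (hε : 0 < ε)
    (h : ∀ w ∈ ball z ε, ‖b - w‖ ≤ ‖a - w‖) :
    ε * ‖a - b‖ ≤ ‖a - z‖ ^ 2 - ‖b - z‖ ^ 2 := by
  rcases eq_or_ne (a - b) 0 with hab | hab
  · rw [hab, norm_zero, mul_zero, sub_eq_zero.mp hab, sub_self]
  set c := ε / (2 * ‖a - b‖)
  have hw := add_smul_mem_ball (z := z) hε hab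
  have hsq : ‖a - (z + c • (a - b))‖ ^ 2 - ‖b - (z + c • (a - b))‖ ^ 2
      = ‖a - z‖ ^ 2 - ‖b - z‖ ^ 2 - 2 * c * ‖a - b‖ ^ 2 := by
    have ha : a - (z + c • (a - b)) = (a - z) - c • (a - b) := by abel
    have hb : b - (z + c • (a - b)) = (b - z) - c • (a - b) := by abel
    have hi : ⟪a - z, a - b⟫ - ⟪b - z, a - b⟫ = ‖a - b‖ ^ 2 := by
      rw [← inner_sub_left, sub_sub_sub_cancel_right, real_inner_self_eq_norm_sq]
    rw [ha, hb, norm_sub_sq_real (a - z), norm_sub_sq_real (b - z), real_inner_smul_right,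
      real_inner_smul_right]
    linear_combination (-2 * c) * hi
  have hc : 2 * c * ‖a - b‖ ^ 2 = ε * ‖a - b‖ := by
    have := norm_pos_iff.mpr hab
    simp only [c]
    field_simp
  nlinarith [h _ hw, norm_nonneg (b - (z + c • (a - b)))]

lemma eq_of_forall_mem_ball_norm_sub_eq {z u v : H} {ε : ℝ} (hε : 0 < ε)
    (h : ∀ w ∈ ball z ε, ‖u - w‖ = ‖v - w‖) : u = v := by
  have hbound := mul_norm_sub_le_sq_sub_sq hε fun w hw => (h w hw).ge
  rw [h z (mem_ball_self hε), sub_self] at hbound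
  have : ‖u - v‖ ≤ 0 := nonpos_of_mul_nonpos_right hbound hε
  exact sub_eq_zero.mp (norm_le_zero_iff.mp this)

lemma cauchySeq_of_forall_mem_ball_norm_sub_le {x : ℕ → H} {z : H} {ε : ℝ} (hε : 0 < ε)
    (h : ∀ k, ∀ w ∈ ball z ε, ‖x (k + 1) - w‖ ≤ ‖x k - w‖) : CauchySeq x := by
  have hsum : ∀ n, ∑ k ∈ Finset.range n, ‖x k - x (k + 1)‖ ≤ ‖x 0 - z‖ ^ 2 / ε := by
    intro n
    rw [le_div_iff₀ hε, Finset.sum_mul]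
    calc ∑ k ∈ Finset.range n, ‖x k - x (k + 1)‖ * ε
        ≤ ∑ k ∈ Finset.range n, (‖x k - z‖ ^ 2 - ‖x (k + 1) - z‖ ^ 2) :=
          Finset.sum_le_sum fun k _ =>
            (mul_comm _ _).trans_le (mul_norm_sub_le_sq_sub_sq hε (h k))
      _ = ‖x 0 - z‖ ^ 2 - ‖x n - z‖ ^ 2 := Finset.sum_range_sub' (fun k => ‖x k - z‖ ^ 2) n
      _ ≤ ‖x 0 - z‖ ^ 2 := sub_le_self _ (sq_nonneg _)
  refine cauchySeq_of_summable_dist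
    (summable_of_sum_range_le (c := ‖x 0 - z‖ ^ 2 / ε) (fun _ => dist_nonneg) ?_)
  simpa only [dist_eq_norm] using hsum

lemma exists_fixedPt_tendsto_of_lipschitzWith_one [CompleteSpace H] {f : H → H}
    (hf : LipschitzWith 1 f) {z : H} {ε : ℝ} (hε : 0 < ε) (hfix : ∀ w ∈ ball z ε, f w = w)
    {x : ℕ → H} (hx : ∀ k, x (k + 1) = f (x k)) :
    ∃ xs, f xs = xs ∧ Tendsto x atTop (𝓝 xs) := by
  have hfejer : ∀ k, ∀ w ∈ ball z ε, ‖x (k + 1) - w‖ ≤ ‖x k - w‖ := fun k w hw => by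
    simpa only [hx, hfix w hw, NNReal.coe_one, one_mul] using hf.norm_sub_le (x k) w
  obtain ⟨xs, hxs⟩ := cauchySeq_tendsto_of_complete
    (cauchySeq_of_forall_mem_ball_norm_sub_le hε hfejer)
  refine ⟨xs, tendsto_nhds_unique ?_ ((tendsto_add_atTop_iff_nat 1).mpr hxs), hxs⟩
  simpa only [hx, Function.comp_def] using (hf.continuous.tendsto xs).comp hxs

/-- If the composition fixes `x`, then for `w` in the ball
`‖x - w‖ ≤ ‖f 0 x - w‖ ≤ ‖x - w‖`, so `f 0 x = x` by `eq_of_forall_mem_ball_norm_sub_eq`. -/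
lemma forall_eq_self_of_foldl_eq_self {n : ℕ} {f : Fin n → H → H}
    (hf : ∀ i, LipschitzWith 1 (f i)) {z : H} {ε : ℝ} (hε : 0 < ε)
    (hfix : ∀ i, ∀ w ∈ ball z ε, f i w = w) {x : H}
    (hx : Fin.foldl n (fun y i => f i y) x = x) : ∀ i, f i x = x := by
  induction n with
  | zero => exact fun i => i.elim0
  | succ n ih =>
    rw [Fin.foldl_succ] at hx
    have hrest : LipschitzWith 1 fun y => Fin.foldl n (fun y i => f i.succ y) y := by
      simpa only [one_pow] using lipschitzWith_foldl fun i => hf i.succ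
    have hfirst : f 0 x = x := by
      refine eq_of_forall_mem_ball_norm_sub_eq (z := z) hε fun w hw => le_antisymm ?_ ?_
      · simpa only [hfix 0 w hw, NNReal.coe_one, one_mul] using (hf 0).norm_sub_le x w
      · conv_lhs => rw [← hx, ← foldl_eq_self_of_forall_eq_self fun i => hfix i.succ w hw]
        simpa only [NNReal.coe_one, one_mul] using hrest.norm_sub_le (f 0 x) w
    rw [hfirst] at hx
    exact Fin.cases hfirst (ih (fun i => hf i.succ) (fun i => hfix i.succ) hx)

end BallFejer

section MetricProjection

variable {H : Type*} [NormedAddCommGroup H]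

def IsMetricProjection (K : Set H) (p : H → H) : Prop :=
  ∀ x, p x ∈ K ∧ ∀ y ∈ K, ‖x - p x‖ ≤ ‖x - y‖

namespace IsMetricProjection

variable {K : Set H} {p : H → H}

lemma apply_eq_self (hp : IsMetricProjection K p) {x : H} (hx : x ∈ K) : p x = x := by
  have h := (hp x).2 x hx
  rw [sub_self, norm_zero, norm_le_zero_iff, sub_eq_zero] at h
  exact h.symm

variable [InnerProductSpace ℝ H]

lemma inner_sub_le_zero (hp : IsMetricProjection K p) (hK : Convex ℝ K) (x : H) {y : H}
    (hy : y ∈ K) : ⟪x - p x, y - p x⟫ ≤ 0 := by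
  refine (norm_eq_iInf_iff_real_inner_le_zero hK (hp x).1).mp (le_antisymm ?_ ?_) y hy
  · have : Nonempty K := ⟨⟨p x, (hp x).1⟩⟩
    exact le_ciInf fun w => (hp x).2 w w.2
  · exact ciInf_le ⟨0, Set.forall_mem_range.mpr fun _ => norm_nonneg _⟩ (⟨p x, (hp x).1⟩ : K)

lemma sq_norm_sub_le_inner (hp : IsMetricProjection K p) (hK : Convex ℝ K) (a b : H) :
    ‖p a - p b‖ ^ 2 ≤ ⟪a - b, p a - p b⟫ := by
  have ha := hp.inner_sub_le_zero hK a (hp b).1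
  have hb := hp.inner_sub_le_zero hK b (hp a).1
  have hsum : ⟪a - p a, p b - p a⟫ + ⟪b - p b, p a - p b⟫
      = ‖p a - p b‖ ^ 2 - ⟪a - b, p a - p b⟫ := by
    rw [← neg_sub (p a) (p b), inner_neg_right, neg_add_eq_sub, ← inner_sub_left,
      ← real_inner_self_eq_norm_sq, ← inner_sub_left]
    congr 1
    abel
  linarith

lemma lipschitzWith_reflection (hp : IsMetricProjection K p) (hK : Convex ℝ K) :
    LipschitzWith 1 fun x => (2 : ℝ) • p x - x := by
  refine LipschitzWith.of_dist_le_mul fun a b => ?_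
  rw [NNReal.coe_one, one_mul, dist_eq_norm, dist_eq_norm]
  have hexp : ‖((2 : ℝ) • p a - a) - ((2 : ℝ) • p b - b)‖ ^ 2
      = ‖a - b‖ ^ 2 + 4 * (‖p a - p b‖ ^ 2 - ⟪a - b, p a - p b⟫) := by
    have : ((2 : ℝ) • p a - a) - ((2 : ℝ) • p b - b) = (2 : ℝ) • (p a - p b) - (a - b) := by
      module
    rw [this, norm_sub_sq_real, norm_smul, real_inner_smul_left, real_inner_comm,
      Real.norm_two]
    ring
  have := hp.sq_norm_sub_le_inner hK a b
  exact pow_le_pow_iff_left₀ (norm_nonneg _) (norm_nonneg _) two_ne_zero |>.mp (by nlinarith)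

lemma reflection_eq_self (hp : IsMetricProjection K p) {x : H} (hx : x ∈ K) :
    (2 : ℝ) • p x - x = x := by
  rw [hp.apply_eq_self hx, two_smul, add_sub_cancel_right]

lemma mem_of_reflection_eq_self (hp : IsMetricProjection K p) {x : H}
    (h : (2 : ℝ) • p x - x = x) : x ∈ K := by
  have : p x = x := by
    rw [sub_eq_iff_eq_add, ← two_smul ℝ x] at h
    exact smul_right_injective H two_ne_zero h
  exact this ▸ (hp x).1

end IsMetricProjection

end MetricProjection

section RSetsDR

variable {H : Type*} [NormedAddCommGroup H] [InnerProductSpace ℝ H]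

/-- With `R j = 2 P_{D_j} - Id` this is the `n`-sets-DR operator `T_{D_0,…,D_{n-1}}`. -/
noncomputable def rSetsDR {n : ℕ} (R : Fin n → H → H) (x : H) : H :=
  (1 / 2 : ℝ) • (x + Fin.foldl n (fun y j => R j y) x)

lemma lipschitzWith_rSetsDR {n : ℕ} {R : Fin n → H → H} (hR : ∀ j, LipschitzWith 1 (R j)) :
    LipschitzWith 1 (rSetsDR R) := by
  have hhalf : ‖(1 / 2 : ℝ)‖₊ * (1 + 1) = 1 := by ext; norm_num
  have hfold : LipschitzWith 1 fun x => Fin.foldl n (fun y j => R j y) x := by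
    simpa only [one_pow] using lipschitzWith_foldl hR
  have h := (lipschitzWith_smul (1 / 2 : ℝ)).comp (LipschitzWith.id.add hfold)
  rw [hhalf] at h
  exact h

lemma rSetsDR_eq_self_iff {n : ℕ} {R : Fin n → H → H} {x : H} :
    rSetsDR R x = x ↔ Fin.foldl n (fun y j => R j y) x = x := by
  constructor
  · intro h
    calc Fin.foldl n (fun y j => R j y) x = (2 : ℝ) • rSetsDR R x - x := by
          rw [rSetsDR]; module
      _ = x := by rw [h]; module
  · intro h
    rw [rSetsDR, h]
    module

lemma rSetsDR_eq_self_of_forall {n : ℕ} {R : Fin n → H → H} {x : H} (h : ∀ j, R j x = x) :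
    rSetsDR R x = x :=
  rSetsDR_eq_self_iff.mpr (foldl_eq_self_of_forall_eq_self h)

lemma forall_eq_self_of_rSetsDR_eq_self {n : ℕ} {R : Fin n → H → H}
    (hR : ∀ j, LipschitzWith 1 (R j)) {z : H} {ε : ℝ} (hε : 0 < ε)
    (hfix : ∀ j, ∀ w ∈ ball z ε, R j w = w) {x : H} (hx : rSetsDR R x = x) :
    ∀ j, R j x = x :=
  forall_eq_self_of_foldl_eq_self hR hε hfix (rSetsDR_eq_self_iff.mp hx)

end RSetsDR

lemma exists_mul_add_mod_eq {q m i : ℕ} (hq : 0 < q) (hi : i < m) :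
    ∃ d < m, ∃ j < q, (q * d + j) % m = i :=
  ⟨i / q, (Nat.div_le_self i q).trans_lt hi, i % q, Nat.mod_lt i hq, by
    rw [Nat.div_add_mod, Nat.mod_eq_of_lt hi]⟩

theorem cyclic_rSetsDR_weak_convergence_general
    {H : Type*} [NormedAddCommGroup H] [InnerProductSpace ℝ H] [CompleteSpace H]
    (m r : ℕ) (hr : 2 ≤ r) (hrm : r ≤ m - 1)
    (C : ℕ → Set H)
    (hcv : ∀ i < m, Convex ℝ (C i))
    (hint : (interior (⋂ i ∈ Finset.range m, C i)).Nonempty)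
    (P : ℕ → H → H)
    (hP : ∀ i < m, ∀ x : H, P i x ∈ C i ∧ ∀ y ∈ C i, ‖x - P i x‖ ≤ ‖x - y‖)
    (S : ℕ → H → H)
    (hS : ∀ d : ℕ, ∀ x : H, S d x = (1 / 2 : ℝ) • (x +
      Fin.foldl r (fun y (j : Fin r) => (2 : ℝ) • P (((r - 1) * (d - 1) + j.val) % m) y - y) x))
    (Q : H → H)
    (hQ : ∀ x : H, Q x = Fin.foldl m (fun y (d : Fin m) => S (d.val + 1) y) x)
    (x : ℕ → H) (hiter : ∀ k : ℕ, x (k + 1) = Q (x k)) :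
    ∃ xs ∈ ⋂ i ∈ Finset.range m, C i,
      ∀ y : H, Tendsto (fun k => ⟪x k, y⟫) atTop (𝓝 ⟪xs, y⟫) := by
  have hm : 0 < m := by omega
  obtain ⟨z, ε, hε, hball⟩ : ∃ z ε, 0 < ε ∧ ∀ i < m, ball z ε ⊆ C i := by
    obtain ⟨z, hz⟩ := hint
    obtain ⟨ε, hε, hzε⟩ := isOpen_iff.mp isOpen_interior z hz
    exact ⟨z, ε, hε, fun i hi => hzε.trans <| interior_subset.trans <|
      Set.biInter_subset_of_mem (Finset.mem_coe.mpr (Finset.mem_range.mpr hi))⟩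
  have hproj : ∀ i, IsMetricProjection (C (i % m)) (P (i % m)) := fun i => hP _ (Nat.mod_lt i hm)
  have hR_lip : ∀ i, LipschitzWith 1 fun y => (2 : ℝ) • P (i % m) y - y := fun i =>
    (hproj i).lipschitzWith_reflection (hcv _ (Nat.mod_lt i hm))
  have hR_fix : ∀ i, ∀ w ∈ ball z ε, (2 : ℝ) • P (i % m) w - w = w := fun i w hw =>
    (hproj i).reflection_eq_self (hball _ (Nat.mod_lt i hm) hw)
  have hS' : ∀ d, S d = rSetsDR fun (j : Fin r) y =>
      (2 : ℝ) • P (((r - 1) * (d - 1) + j.val) % m) y - y := fun d => funext (hS d)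
  have hS_lip : ∀ d, LipschitzWith 1 (S d) := fun d =>
    hS' d ▸ lipschitzWith_rSetsDR fun _ => hR_lip _
  have hS_fix : ∀ d, ∀ w ∈ ball z ε, S d w = w := fun d w hw => by
    rw [hS' d]
    exact rSetsDR_eq_self_of_forall fun _ => hR_fix _ w hw
  have hQ_lip : LipschitzWith 1 Q := by
    simpa only [← funext hQ, one_pow] using lipschitzWith_foldl fun d : Fin m => hS_lip (d + 1)
  obtain ⟨xs, hQxs, hlim⟩ := exists_fixedPt_tendsto_of_lipschitzWith_one hQ_lip hε
    (fun w hw => (hQ w).trans (foldl_eq_self_of_forall_eq_self fun _ => hS_fix _ w hw)) hiter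
  have hRxs : ∀ d : Fin m, ∀ j : Fin r, (2 : ℝ) • P (((r - 1) * d + j) % m) xs - xs = xs := by
    intro d
    have hSxs := forall_eq_self_of_foldl_eq_self (fun _ => hS_lip _) hε (fun _ => hS_fix _)
      ((hQ xs).symm.trans hQxs) d
    rw [hS', Nat.add_sub_cancel] at hSxs
    exact forall_eq_self_of_rSetsDR_eq_self (fun _ => hR_lip _) hε (fun _ => hR_fix _) hSxs
  refine ⟨xs, Set.mem_iInter₂.mpr fun i hi => ?_, fun y => hlim.inner tendsto_const_nhds⟩
  obtain ⟨d, hd, j, hj, rfl⟩ :=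
    exists_mul_add_mod_eq (by omega : 0 < r - 1) (Finset.mem_range.mp hi)
  exact (hproj _).mem_of_reflection_eq_self (hRxs ⟨d, hd⟩ ⟨j, by omega⟩)

/-- For nonempty closed convex sets `C₀,…,C_{m-1}` with `int(⋂ C_i) ≠ ∅` and
`r ∈ {2,…,m-1}`, the iterates `x^{k+1} = Q(x^k)` of the cyclic `r`-sets-DR operator
`Q = S_m ∘ ⋯ ∘ S_1` converge weakly to a point in `⋂_{i=0}^{m-1} C_i`. -/
theorem cyclic_rSetsDR_weak_convergence
    {H : Type*} [NormedAddCommGroup H] [InnerProductSpace ℝ H] [CompleteSpace H]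
    (m r : ℕ) (hr : 2 ≤ r) (hrm : r ≤ m - 1)
    (C : ℕ → Set H)
    (hne : ∀ i < m, (C i).Nonempty) (hcl : ∀ i < m, IsClosed (C i))
    (hcv : ∀ i < m, Convex ℝ (C i))
    (hint : (interior (⋂ i ∈ Finset.range m, C i)).Nonempty)
    (P : ℕ → H → H)
    (hP : ∀ i < m, ∀ x : H, P i x ∈ C i ∧ ∀ y ∈ C i, ‖x - P i x‖ ≤ ‖x - y‖)
    (S : ℕ → H → H)
    (hS : ∀ d : ℕ, ∀ x : H, S d x = (1 / 2 : ℝ) • (x +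
      Fin.foldl r (fun y (j : Fin r) => (2 : ℝ) • P (((r - 1) * (d - 1) + j.val) % m) y - y) x))
    (Q : H → H)
    (hQ : ∀ x : H, Q x = Fin.foldl m (fun y (d : Fin m) => S (d.val + 1) y) x)
    (x : ℕ → H) (hiter : ∀ k : ℕ, x (k + 1) = Q (x k)) :
    ∃ xs ∈ ⋂ i ∈ Finset.range m, C i,
      ∀ y : H, Tendsto (fun k => ⟪x k, y⟫) atTop (𝓝 ⟪xs, y⟫) :=
  cyclic_rSetsDR_weak_convergence_general m r hr hrm C hcv hint P hP S hS Q hQ x hiter
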